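/- Let Λ be a symmetric n×n real matrix with λ₁·I ⪯ Λ ⪯ λ₂·I for constants 0 < λ₁ ≤ λ₂, and let M : ℝ → ℝ^{n×n} with M(t) symmetric and m₁·I ⪯ M(t) ⪯ m₂·I for constants 0 < m₁ ≤ m₂ and all t (Loewner order). Then every differentiable x : ℝ → ℝⁿ satisfying x'(t) = −M(t)⁻¹Λ·x(t) obeys ‖x(t)‖ ≤ √(λ₂/λ₁)·e^{−(λ₁/m₂)(t−t₀)}·‖x(t₀)‖ for all t ≥ t₀; in particular x(t) → 0 exponentially. -/

import Mathlib

/-!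
The Lyapunov function `V(x) = xᵀΛx` decays at rate `2λ₁/m₂` along solutions. With `y = Λx`
one has `V' = -2 yᵀM⁻¹y`, and two Loewner-order facts give `yᵀM⁻¹y ≥ |y|²/m₂ ≥ (λ₁/m₂) V`:
`M ⪯ m₂` implies `M² ⪯ m₂M`, i.e. `M⁻¹ ⪰ 1/m₂`, and `Λ ⪰ λ₁` implies `Λ² ⪰ λ₁Λ`.
Grönwall then yields `V(t) ≤ e^{-2(λ₁/m₂)(t - t₀)} V(t₀)`, and `λ₁|x|² ≤ V ≤ λ₂|x|²` converts
this into the bound on `|x|`.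
-/

open Matrix

namespace Matrix

variable {ι : Type*} [Fintype ι]

lemma IsSymm.dotProduct_mulVec_comm {R : Type*} [CommSemiring R] {A : Matrix ι ι R}
    (hA : A.IsSymm) (v w : ι → R) : v ⬝ᵥ (A *ᵥ w) = w ⬝ᵥ (A *ᵥ v) := by
  rw [dotProduct_mulVec, ← mulVec_transpose, hA.eq, dotProduct_comm]

lemma PosSemidef.dotProduct_mulVec_le {A B : Matrix ι ι ℝ} (h : (B - A).PosSemidef)
    (x : ι → ℝ) : x ⬝ᵥ (A *ᵥ x) ≤ x ⬝ᵥ (B *ᵥ x) := by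
  have := h.dotProduct_mulVec_nonneg x
  rwa [star_trivial, sub_mulVec, dotProduct_sub, sub_nonneg] at this

variable [DecidableEq ι]

lemma PosSemidef.mul_dotProduct_le_dotProduct_mulVec {A : Matrix ι ι ℝ} {a : ℝ}
    (h : (A - a • 1).PosSemidef) (x : ι → ℝ) : a * (x ⬝ᵥ x) ≤ x ⬝ᵥ (A *ᵥ x) := by
  simpa [smul_mulVec] using h.dotProduct_mulVec_le x

lemma PosSemidef.dotProduct_mulVec_le_mul_dotProduct {A : Matrix ι ι ℝ} {a : ℝ}
    (h : (a • 1 - A).PosSemidef) (x : ι → ℝ) : x ⬝ᵥ (A *ᵥ x) ≤ a * (x ⬝ᵥ x) := by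
  simpa [smul_mulVec] using h.dotProduct_mulVec_le x

lemma PosSemidef.mul_dotProduct_mulVec_le_mulVec_dotProduct_mulVec {A : Matrix ι ι ℝ} {a : ℝ}
    (hA : (A - a • 1).PosSemidef) (ha : 0 ≤ a) (x : ι → ℝ) :
    a * (x ⬝ᵥ (A *ᵥ x)) ≤ (A *ᵥ x) ⬝ᵥ (A *ᵥ x) := by
  set B := A - a • 1
  have hAx : A *ᵥ x = B *ᵥ x + a • x := by
    simp only [B, sub_mulVec, smul_mulVec, one_mulVec, sub_add_cancel]
  have hBx := hA.dotProduct_mulVec_nonneg x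
  rw [star_trivial] at hBx
  have hBB : 0 ≤ (B *ᵥ x) ⬝ᵥ (B *ᵥ x) := dotProduct_self_star_nonneg _
  -- `A² - aA = B² + aB`
  rw [hAx]
  simp only [dotProduct_add, add_dotProduct, dotProduct_smul, smul_dotProduct, smul_eq_mul,
    dotProduct_comm (B *ᵥ x) x]
  linarith [mul_nonneg ha hBx]

lemma PosSemidef.mulVec_dotProduct_mulVec_le_mul_dotProduct_mulVec {M : Matrix ι ι ℝ} {b : ℝ}
    (hM : M.PosSemidef) (hMb : (b • 1 - M).PosSemidef) (hb : 0 < b) (u : ι → ℝ) :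
    (M *ᵥ u) ⬝ᵥ (M *ᵥ u) ≤ b * (u ⬝ᵥ (M *ᵥ u)) := by
  have hMsymm : M.IsSymm := hM.isHermitian
  set C := b • 1 - M
  have hCv : ∀ v, C *ᵥ v = b • v - M *ᵥ v := fun v => by
    simp only [C, sub_mulVec, smul_mulVec, one_mulVec]
  have hM_Cu := hM.dotProduct_mulVec_nonneg (C *ᵥ u)
  have hC_Mu := hMb.dotProduct_mulVec_nonneg (M *ᵥ u)
  rw [star_trivial] at hM_Cu hC_Mu
  -- `M` and `C` commute and `M + C = b`, so `b (bM - M²) = CMC + MCM`.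
  have key : b * (b * (u ⬝ᵥ (M *ᵥ u)) - (M *ᵥ u) ⬝ᵥ (M *ᵥ u)) =
      (C *ᵥ u) ⬝ᵥ (M *ᵥ (C *ᵥ u)) + (M *ᵥ u) ⬝ᵥ (C *ᵥ (M *ᵥ u)) := by
    rw [hCv, hCv, mulVec_sub, mulVec_smul]
    simp only [dotProduct_sub, sub_dotProduct, dotProduct_smul, smul_dotProduct, smul_eq_mul,
      hMsymm.dotProduct_mulVec_comm u (M *ᵥ u), dotProduct_comm u (M *ᵥ u)]
    ring
  have := (mul_nonneg_iff_of_pos_left hb).1 (key ▸ add_nonneg hM_Cu hC_Mu)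
  linarith

lemma PosDef.dotProduct_le_mul_inv_mulVec_dotProduct {M : Matrix ι ι ℝ} {b : ℝ}
    (hM : M.PosDef) (hMb : (b • 1 - M).PosSemidef) (hb : 0 < b) (y : ι → ℝ) :
    y ⬝ᵥ y ≤ b * ((M⁻¹ *ᵥ y) ⬝ᵥ y) := by
  have hy : M *ᵥ (M⁻¹ *ᵥ y) = y := by
    rw [mulVec_mulVec, mul_nonsing_inv _ ((isUnit_iff_isUnit_det M).1 hM.isUnit), one_mulVec]
  simpa only [hy] using
    hM.posSemidef.mulVec_dotProduct_mulVec_le_mul_dotProduct_mulVec hMb hb (M⁻¹ *ᵥ y)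

lemma PosDef.div_mul_dotProduct_mulVec_le_inv_mulVec_dotProduct {M A : Matrix ι ι ℝ} {a b : ℝ}
    (hM : M.PosDef) (hMb : (b • 1 - M).PosSemidef) (hb : 0 < b)
    (hA : (A - a • 1).PosSemidef) (ha : 0 ≤ a) (x : ι → ℝ) :
    a / b * (x ⬝ᵥ (A *ᵥ x)) ≤ (M⁻¹ *ᵥ (A *ᵥ x)) ⬝ᵥ (A *ᵥ x) := by
  have hA2 := hA.mul_dotProduct_mulVec_le_mulVec_dotProduct_mulVec ha x
  have hMinv := hM.dotProduct_le_mul_inv_mulVec_dotProduct hMb hb (A *ᵥ x)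
  rw [div_mul_eq_mul_div, div_le_iff₀ hb]
  linarith

lemma PosSemidef.sqrt_dotProduct_le_of_dotProduct_mulVec_le {A : Matrix ι ι ℝ} {a b c : ℝ}
    (ha : 0 < a) (hA : (A - a • 1).PosSemidef) (hAb : (b • 1 - A).PosSemidef) {x y : ι → ℝ}
    (h : x ⬝ᵥ (A *ᵥ x) ≤ y ⬝ᵥ (A *ᵥ y) * Real.exp (2 * c)) :
    Real.sqrt (x ⬝ᵥ x) ≤ Real.sqrt (b / a) * Real.exp c * Real.sqrt (y ⬝ᵥ y) := by
  have hy : 0 ≤ y ⬝ᵥ y := dotProduct_self_star_nonneg _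
  have hsq : a * (x ⬝ᵥ x) ≤ a * (b / a * Real.exp c ^ 2 * (y ⬝ᵥ y)) :=
    calc a * (x ⬝ᵥ x)
        ≤ y ⬝ᵥ (A *ᵥ y) * Real.exp (2 * c) := (hA.mul_dotProduct_le_dotProduct_mulVec x).trans h
      _ ≤ b * (y ⬝ᵥ y) * Real.exp (2 * c) :=
        mul_le_mul_of_nonneg_right (hAb.dotProduct_mulVec_le_mul_dotProduct y) (Real.exp_pos _).le
      _ = a * (b / a * Real.exp c ^ 2 * (y ⬝ᵥ y)) := by
        rw [sq, ← Real.exp_add, ← two_mul]; field_simp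
  calc Real.sqrt (x ⬝ᵥ x)
      ≤ Real.sqrt (b / a * Real.exp c ^ 2 * (y ⬝ᵥ y)) :=
        Real.sqrt_le_sqrt (le_of_mul_le_mul_left hsq ha)
    _ = _ := by
      rw [Real.sqrt_mul' _ hy, Real.sqrt_mul' _ (sq_nonneg _), Real.sqrt_sq (Real.exp_pos _).le]

end Matrix

section Derivatives

variable {𝕜 : Type*} [NontriviallyNormedField 𝕜] {ι : Type*} [Fintype ι]
  {u v : 𝕜 → ι → 𝕜} {u' v' : ι → 𝕜} {t : 𝕜}

lemma HasDerivAt.dotProduct (hu : HasDerivAt u u' t) (hv : HasDerivAt v v' t) :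
    HasDerivAt (fun s => u s ⬝ᵥ v s) (u' ⬝ᵥ v t + u t ⬝ᵥ v') t := by
  unfold _root_.dotProduct
  rw [← Finset.sum_add_distrib]
  exact HasDerivAt.fun_sum fun i _ => (hasDerivAt_pi.1 hu i).mul (hasDerivAt_pi.1 hv i)

lemma HasDerivAt.mulVec {κ : Type*} (A : Matrix κ ι 𝕜) (hu : HasDerivAt u u' t) :
    HasDerivAt (fun s => A *ᵥ u s) (A *ᵥ u') t :=
  hasDerivAt_pi.2 fun i => HasDerivAt.fun_sum fun j _ => (hasDerivAt_pi.1 hu j).const_mul (A i j)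

lemma HasDerivAt.dotProduct_mulVec_self {A : Matrix ι ι 𝕜} (hA : A.IsSymm)
    (hu : HasDerivAt u u' t) :
    HasDerivAt (fun s => u s ⬝ᵥ (A *ᵥ u s)) (2 * (u' ⬝ᵥ (A *ᵥ u t))) t := by
  convert hu.dotProduct (hu.mulVec A) using 1
  rw [hA.dotProduct_mulVec_comm (u t), two_mul]

end Derivatives

lemma le_mul_exp_of_hasDerivAt_le_mul {f f' : ℝ → ℝ} {K a b : ℝ}
    (hf : ∀ t, HasDerivAt f (f' t) t) (bound : ∀ t, f' t ≤ K * f t) (hab : a ≤ b) :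
    f b ≤ f a * Real.exp (K * (b - a)) := by
  have := le_gronwallBound_of_liminf_deriv_right_le (ε := 0)
    (fun t _ => (hf t).continuousAt.continuousWithinAt)
    (fun t _ _ hr => (hf t).hasDerivWithinAt.liminf_right_slope_le hr) le_rfl
    (fun t _ => (add_zero (K * f t)).symm ▸ bound t) b ⟨hab, le_rfl⟩
  rwa [gronwallBound_ε0] at this

theorem position_error_dynamics_exponentially_stable_general
    {n : ℕ}
    (Λ : Matrix (Fin n) (Fin n) ℝ) (hΛsymm : Λ.IsSymm)
    (lam₁ lam₂ : ℝ) (hlam₁ : 0 < lam₁)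
    (hΛlb : (Λ - lam₁ • (1 : Matrix (Fin n) (Fin n) ℝ)).PosSemidef)
    (hΛub : (lam₂ • (1 : Matrix (Fin n) (Fin n) ℝ) - Λ).PosSemidef)
    (M : ℝ → Matrix (Fin n) (Fin n) ℝ)
    (m₁ m₂ : ℝ) (hm₁ : 0 < m₁) (hm₁₂ : m₁ ≤ m₂)
    (hMlb : ∀ t, (M t - m₁ • (1 : Matrix (Fin n) (Fin n) ℝ)).PosSemidef)
    (hMub : ∀ t, (m₂ • (1 : Matrix (Fin n) (Fin n) ℝ) - M t).PosSemidef)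
    (x : ℝ → Fin n → ℝ)
    (hx : ∀ t, HasDerivAt x (-((M t)⁻¹ *ᵥ (Λ *ᵥ x t))) t) :
    ∀ t₀ t : ℝ, t₀ ≤ t →
      Real.sqrt (x t ⬝ᵥ x t)
        ≤ Real.sqrt (lam₂ / lam₁) * Real.exp (-(lam₁ / m₂) * (t - t₀)) *
            Real.sqrt (x t₀ ⬝ᵥ x t₀) := by
  intro t₀ t ht
  have hm₂ : 0 < m₂ := hm₁.trans_le hm₁₂
  have hM (s : ℝ) : (M s).PosDef := by
    simpa using PosDef.posSemidef_add (hMlb s) (PosDef.one.smul hm₁)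
  set V : ℝ → ℝ := fun s => x s ⬝ᵥ (Λ *ᵥ x s)
  have hV (s : ℝ) := (hx s).dotProduct_mulVec_self hΛsymm
  have hdecay (s : ℝ) :
      2 * (-((M s)⁻¹ *ᵥ (Λ *ᵥ x s)) ⬝ᵥ (Λ *ᵥ x s)) ≤ -(2 * (lam₁ / m₂)) * V s := by
    have := (hM s).div_mul_dotProduct_mulVec_le_inv_mulVec_dotProduct (hMub s) hm₂ hΛlb
      hlam₁.le (x s)
    rw [neg_dotProduct]
    linarith
  have hVt := le_mul_exp_of_hasDerivAt_le_mul hV hdecay ht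
  refine hΛlb.sqrt_dotProduct_le_of_dotProduct_mulVec_le hlam₁ hΛub (hVt.trans_eq ?_)
  ring_nf

/-- exponential stability of the position-error dynamics
`x' = −M(t)⁻¹Λx` on the sliding manifold, with explicit rate `λ₁/m₂` and overshoot
constant `√(λ₂/λ₁)`. -/
theorem position_error_dynamics_exponentially_stable
    {n : ℕ}
    (Λ : Matrix (Fin n) (Fin n) ℝ) (hΛsymm : Λ.IsSymm)
    (lam₁ lam₂ : ℝ) (hlam₁ : 0 < lam₁) (hlam₁₂ : lam₁ ≤ lam₂)
    (hΛlb : (Λ - lam₁ • (1 : Matrix (Fin n) (Fin n) ℝ)).PosSemidef)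
    (hΛub : (lam₂ • (1 : Matrix (Fin n) (Fin n) ℝ) - Λ).PosSemidef)
    (M : ℝ → Matrix (Fin n) (Fin n) ℝ) (hMsymm : ∀ t, (M t).IsSymm)
    (m₁ m₂ : ℝ) (hm₁ : 0 < m₁) (hm₁₂ : m₁ ≤ m₂)
    (hMlb : ∀ t, (M t - m₁ • (1 : Matrix (Fin n) (Fin n) ℝ)).PosSemidef)
    (hMub : ∀ t, (m₂ • (1 : Matrix (Fin n) (Fin n) ℝ) - M t).PosSemidef)
    (x : ℝ → Fin n → ℝ)
    (hx : ∀ t, HasDerivAt x (-((M t)⁻¹ *ᵥ (Λ *ᵥ x t))) t) :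
    ∀ t₀ t : ℝ, t₀ ≤ t →
      Real.sqrt (x t ⬝ᵥ x t)
        ≤ Real.sqrt (lam₂ / lam₁) * Real.exp (-(lam₁ / m₂) * (t - t₀)) *
            Real.sqrt (x t₀ ⬝ᵥ x t₀) :=
  position_error_dynamics_exponentially_stable_general Λ hΛsymm lam₁ lam₂ hlam₁ hΛlb hΛub M m₁ m₂
    hm₁ hm₁₂ hMlb hMub x hx
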